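/- arXiv:2303.16995 — 2 statements merged into one kernel-verified Lean document; each statement's English description precedes it below -/
import Mathlib

section
/- If a red/blue coloring φ of the triples of [N] contains no blue tight monotone path on n vertices, then the coloring χ of pairs of [N], where χ(u,v) is the number of vertices in the longest blue tight monotone path ending with the pair (u,v), takes values in {2, 3, ..., n-1}, and every non-increasing triple with respect to χ is colored red by φ. -/
/-- A triple `u < v < w` is non-increasing with respect to `χ` if
`χ(u,v) = χ(u,w) ≥ χ(v,w)` or `χ(u,v) ≥ χ(v,w) = χ(u,w)`. -/
def NonIncTriple (χ : ℕ → ℕ → ℕ) (u v w : ℕ) : Prop :=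
  (χ u v = χ u w ∧ χ v w ≤ χ u w) ∨ (χ v w = χ u w ∧ χ v w ≤ χ u v)

/-- There is a blue (`false`-colored) tight monotone path with `m` vertices inside
`{1,...,N}` ending at the pair `(u, v)`. -/
def BlueTightPathEnd (N : ℕ) (φ : ℕ → ℕ → ℕ → Bool) (m u v : ℕ) : Prop :=
  2 ≤ m ∧ ∃ w : ℕ → ℕ, (∀ i < m, w i ∈ Finset.Icc 1 N) ∧
    (∀ i j, i < j → j < m → w i < w j) ∧
    w (m - 2) = u ∧ w (m - 1) = v ∧
    ∀ i, i + 2 < m → φ (w i) (w (i + 1)) (w (i + 2)) = false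

/-! If a triple `u < v < w` were blue, appending `w` to a longest blue tight path ending at
`(u, v)` would give a blue tight path ending at `(v, w)`, so `χ(v,w) > χ(u,v)`; a non-increasing
triple has `χ(v,w) ≤ χ(u,v)`. The bound `χ ≤ n - 1` holds because a blue tight path on `n` or
more vertices contains one on exactly `n`. -/

def IsBlueTightPath (N : ℕ) (φ : ℕ → ℕ → ℕ → Bool) (m : ℕ) (w : ℕ → ℕ) : Prop :=
  (∀ i < m, w i ∈ Finset.Icc 1 N) ∧ (∀ i j, i < j → j < m → w i < w j) ∧
    ∀ i, i + 2 < m → φ (w i) (w (i + 1)) (w (i + 2)) = false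

theorem IsBlueTightPath.of_le {N : ℕ} {φ : ℕ → ℕ → ℕ → Bool} {m n : ℕ} {w : ℕ → ℕ}
    (h : IsBlueTightPath N φ m w) (hnm : n ≤ m) : IsBlueTightPath N φ n w :=
  ⟨fun i hi => h.1 i (by omega), fun i j hij hj => h.2.1 i j hij (by omega),
    fun i hi => h.2.2 i (by omega)⟩

namespace BlueTightPathEnd

variable {N : ℕ} {φ : ℕ → ℕ → ℕ → Bool} {m u v : ℕ}

theorem lt_of_not_exists_path {n : ℕ} (hno : ¬ ∃ w, IsBlueTightPath N φ n w)
    (h : BlueTightPathEnd N φ m u v) : m < n := by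
  obtain ⟨-, w, hmem, hmono, -, -, hblue⟩ := h
  by_contra! hnm
  exact hno ⟨w, IsBlueTightPath.of_le ⟨hmem, hmono, hblue⟩ hnm⟩

theorem extend {x : ℕ} (h : BlueTightPathEnd N φ m u v) (hx : x ∈ Finset.Icc 1 N)
    (hvx : v < x) (hφ : φ u v x = false) : BlueTightPathEnd N φ (m + 1) v x := by
  obtain ⟨hm, p, hmem, hmono, hu, hv, hblue⟩ := h
  have hle_v : ∀ i < m, p i ≤ v := fun i hi => by
    rcases (show i ≤ m - 1 by omega).eq_or_lt with rfl | hlt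
    · exact hv.le
    · exact hv ▸ (hmono i (m - 1) hlt (by omega)).le
  refine ⟨by omega, fun i => if i < m then p i else x, ?_, ?_, ?_, ?_, ?_⟩
  · intro i hi
    dsimp only
    split_ifs with him
    exacts [hmem i him, hx]
  · intro i j hij hj
    have him : i < m := by omega
    by_cases hjm : j < m
    · simpa only [if_pos him, if_pos hjm] using hmono i j hij hjm
    · simpa only [if_pos him, if_neg hjm] using (hle_v i him).trans_lt hvx
  · simpa only [show m + 1 - 2 = m - 1 by omega, if_pos (show m - 1 < m by omega)] using hv
  · simp
  · intro i hi
    have h0 : i < m := by omega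
    by_cases h2 : i + 2 < m
    · simpa only [if_pos h0, if_pos (show i + 1 < m by omega), if_pos h2] using hblue i h2
    · obtain rfl : i = m - 2 := by omega
      simpa only [show m - 2 + 1 = m - 1 by omega, if_pos h0, if_pos (show m - 1 < m by omega),
        if_neg h2, hu, hv] using hφ

end BlueTightPathEnd

theorem NonIncTriple.last_le_first {χ : ℕ → ℕ → ℕ} {u v w : ℕ} (h : NonIncTriple χ u v w) :
    χ v w ≤ χ u v := by
  rcases h with ⟨heq, hle⟩ | ⟨-, hle⟩ <;> omega

/-- If `φ` has no blue tight monotone path on `n` vertices, and `χ(u,v)` is the number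
of vertices of the longest blue tight monotone path ending at `(u,v)`, then `χ` takes
values in `{2, ..., n-1}` and every non-increasing triple with respect to `χ` is
colored red by `φ`. -/
theorem noninc_triples_are_red (N n : ℕ) (φ : ℕ → ℕ → ℕ → Bool) (χ : ℕ → ℕ → ℕ)
    (hno : ¬ ∃ v : ℕ → ℕ, (∀ i < n, v i ∈ Finset.Icc 1 N) ∧
      (∀ i j, i < j → j < n → v i < v j) ∧
      ∀ i, i + 2 < n → φ (v i) (v (i + 1)) (v (i + 2)) = false)
    (hχ : ∀ u v, u ∈ Finset.Icc 1 N → v ∈ Finset.Icc 1 N → u < v →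
      IsGreatest {m | BlueTightPathEnd N φ m u v} (χ u v)) :
    (∀ u v, u ∈ Finset.Icc 1 N → v ∈ Finset.Icc 1 N → u < v →
      2 ≤ χ u v ∧ χ u v ≤ n - 1) ∧
    (∀ u v w, u ∈ Finset.Icc 1 N → v ∈ Finset.Icc 1 N → w ∈ Finset.Icc 1 N →
      u < v → v < w → NonIncTriple χ u v w → φ u v w = true) := by
  refine ⟨fun u v hu hv huv => ?_, fun u v w hu hv hw huv hvw hni => ?_⟩
  · have hpath := (hχ u v hu hv huv).1
    have hlt := hpath.lt_of_not_exists_path hno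
    exact ⟨hpath.1, by omega⟩
  · by_contra hred
    have hext := (hχ u v hu hv huv).1.extend hw hvw (by simpa using hred)
    have hgrow : χ u v + 1 ≤ χ v w := (hχ v w hv hw hvw).2 hext
    have hshrink := hni.last_le_first
    omega
end

section
/- Let S = {u_1 < ... < u_{i-1} < b < u_{i+1} < ... < u_{s-1}} and S' = {u_1 < ... < u_{i-1} < b' < u_{i+1} < ... < u_{s-1}} be two non-increasing sets with the same color pattern with respect to an ordered-color pair coloring χ, with b < b'. Let κ_{i-1} = χ(u_{i-1}, b) (or n if i = 1) and κ_i = χ(b, u_{i+1}) (or the minimum color if i = s-1). If κ_{i-1} ≥ χ(b, b') ≥ κ_i, then the set T = {u_1, ..., u_{i-1}, b, b', u_{i+1}, ..., u_{s-1}} of size s is non-increasing. -/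
def NonIncSeq (χ : ℕ → ℕ → ℕ) (f : ℕ → ℕ) (m : ℕ) : Prop :=
  ∀ j k l, 1 ≤ j → j < k → k < l → l ≤ m → NonIncTriple χ (f j) (f k) (f l)

def NonIncSet (χ : ℕ → ℕ → ℕ) (T : Set ℕ) : Prop :=
  ∀ x ∈ T, ∀ y ∈ T, ∀ z ∈ T, x < y → y < z → NonIncTriple χ x y z

open Set

variable {χ : ℕ → ℕ → ℕ}

namespace NonIncTriple

variable {u v w : ℕ}

theorem outer_le_left (h : NonIncTriple χ u v w) : χ u w ≤ χ u v := by
  rcases h with ⟨h, -⟩ | ⟨h, h'⟩ <;> omega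

theorem right_le_outer (h : NonIncTriple χ u v w) : χ v w ≤ χ u w := by
  rcases h with ⟨-, h⟩ | ⟨h, -⟩ <;> omega

end NonIncTriple

namespace NonIncSeq

variable {f : ℕ → ℕ} {m i j k l : ℕ}

theorem apply_le_apply_left (hf : NonIncSeq χ f m) (hj : 1 ≤ j) (hjk : j < k) (hkl : k ≤ l)
    (hl : l ≤ m) : χ (f j) (f l) ≤ χ (f j) (f k) := by
  rcases hkl.eq_or_lt with rfl | hkl
  · exact le_rfl
  · exact (hf j k l hj hjk hkl hl).outer_le_left

theorem apply_le_apply_right (hf : NonIncSeq χ f m) (hj : 1 ≤ j) (hjk : j ≤ k) (hkl : k < l)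
    (hl : l ≤ m) : χ (f k) (f l) ≤ χ (f j) (f l) := by
  rcases hjk.eq_or_lt with rfl | hjk
  · exact le_rfl
  · exact (hf j k l hj hjk hkl hl).right_le_outer

theorem nonIncSet_image (hf : NonIncSeq χ f m) (hmono : StrictMonoOn f (Icc 1 m)) :
    NonIncSet χ (f '' Icc 1 m) := by
  rintro _ ⟨j, hj, rfl⟩ _ ⟨k, hk, rfl⟩ _ ⟨l, hl, rfl⟩ hjk hkl
  exact hf j k l hj.1 ((hmono.lt_iff_lt hj hk).1 hjk) ((hmono.lt_iff_lt hk hl).1 hkl) hl.2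

/-- `hb'` is the paper's `χ(b, b') ≤ κ_{i-1}` for `b = f i`. -/
theorem nonIncTriple_insert_left {b' : ℕ} (hf : NonIncSeq χ f m) (hj : 1 ≤ j) (hji : j < i)
    (hi : i ≤ m) (hpat : χ (f j) (f i) = χ (f j) b')
    (hb' : χ (f i) b' ≤ χ (f (i - 1)) (f i)) : NonIncTriple χ (f j) (f i) b' :=
  Or.inl ⟨hpat, hpat ▸ hb'.trans (hf.apply_le_apply_right hj (by omega) (by omega) hi)⟩

/-- `hb'` is the paper's `κ_i ≤ χ(b, b')` for `b = f i`. -/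
theorem nonIncTriple_insert_right {b' : ℕ} (hf : NonIncSeq χ f m) (hi : 1 ≤ i) (hil : i < l)
    (hl : l ≤ m) (hpat : χ (f i) (f l) = χ b' (f l))
    (hb' : χ (f i) (f (i + 1)) ≤ χ (f i) b') : NonIncTriple χ (f i) b' (f l) :=
  Or.inr ⟨hpat.symm, hpat ▸ (hf.apply_le_apply_left hi (by omega) hil hl).trans hb'⟩

end NonIncSeq

theorem NonIncSet.mono {S T : Set ℕ} (hT : NonIncSet χ T) (hST : S ⊆ T) : NonIncSet χ S :=
  fun x hx y hy z hz => hT x (hST hx) y (hST hy) z (hST hz)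

theorem NonIncSet.insert_of_exchange {S : Set ℕ} {b b' : ℕ} (hS : NonIncSet χ S)
    (hS' : NonIncSet χ (insert b' S \ {b})) (hbb : b < b')
    (hgap : ∀ x ∈ S, b < x → b' < x)
    (hleft : ∀ u ∈ S, u < b → NonIncTriple χ u b b')
    (hright : ∀ v ∈ S, b' < v → NonIncTriple χ b b' v) :
    NonIncSet χ (insert b' S) := by
  have hS'mem : ∀ x ∈ insert b' S, x ≠ b → x ∈ insert b' S \ {b} := fun x hx hxb => ⟨hx, hxb⟩
  rintro x hx y hy z hz hxy hyz
  rcases hx with rfl | hxS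
  · exact hS' x ⟨mem_insert x S, hbb.ne'⟩ y (hS'mem y hy (by omega))
      z (hS'mem z hz (by omega)) hxy hyz
  rcases hy with rfl | hyS
  · have hz' : z ∈ S := hz.resolve_left (by omega)
    by_cases hxb : x = b
    · exact hxb ▸ hright z hz' hyz
    · exact hS' x ⟨mem_insert_of_mem _ hxS, hxb⟩ y ⟨mem_insert y S, hbb.ne'⟩
        z (hS'mem z hz (by omega)) hxy hyz
  rcases hz with rfl | hzS
  · by_cases hyb : y = b
    · exact hyb ▸ hleft x hxS (hyb ▸ hxy)
    · have hxb : x ≠ b := by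
        rintro rfl
        exact absurd (hgap y hyS hxy) (by omega)
      exact hS' x ⟨mem_insert_of_mem _ hxS, hxb⟩ y ⟨mem_insert_of_mem _ hyS, hyb⟩
        z ⟨mem_insert z S, hbb.ne'⟩ hxy hyz
  exact hS x hxS y hyS z hzS hxy hyz

theorem insert_image_diff_subset_image {f g : ℕ → ℕ} {I : Set ℕ} {i : ℕ} (hi : i ∈ I)
    (hfg : ∀ j, j ≠ i → f j = g j) : insert (g i) (f '' I) \ {f i} ⊆ g '' I := by
  rintro x ⟨rfl | ⟨j, hj, rfl⟩, hx⟩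
  · exact mem_image_of_mem g hi
  · exact ⟨j, hj, (hfg j fun hji => hx (hji ▸ rfl)).symm⟩

theorem StrictMonoOn.lt_apply_of_eq_off {f g : ℕ → ℕ} {I : Set ℕ} {i j : ℕ}
    (hf : StrictMonoOn f I) (hg : StrictMonoOn g I) (hfg : ∀ j, j ≠ i → f j = g j)
    (hi : i ∈ I) (hj : j ∈ I) (h : f i < f j) : g i < f j := by
  have hij : i < j := (hf.lt_iff_lt hi hj).1 h
  rw [hfg j hij.ne']
  exact hg hi hj hij

theorem extend_noninc_set_general (s n i : ℕ) (hi1 : 1 ≤ i) (hi2 : i ≤ s - 1)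
    (χ : ℕ → ℕ → ℕ)
    (b b' : ℕ) (hbb : b < b')
    (w w' : ℕ → ℕ) (hwi : w i = b) (hw'i : w' i = b')
    (hagree : ∀ j, j ≠ i → w j = w' j)
    (hw : ∀ j k, 1 ≤ j → j < k → k ≤ s - 1 → w j < w k)
    (hw' : ∀ j k, 1 ≤ j → j < k → k ≤ s - 1 → w' j < w' k)
    (hSnon : ∀ j k l, 1 ≤ j → j < k → k < l → l ≤ s - 1 →
      NonIncTriple χ (w j) (w k) (w l))
    (hS'non : ∀ j k l, 1 ≤ j → j < k → k < l → l ≤ s - 1 →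
      NonIncTriple χ (w' j) (w' k) (w' l))
    (hpat : ∀ j k, 1 ≤ j → j < k → k ≤ s - 1 → χ (w j) (w k) = χ (w' j) (w' k))
    (a c : ℕ)
    (ha : (i = 1 ∧ a = n) ∨ (2 ≤ i ∧ a = χ (w (i - 1)) b))
    (hc : (i = s - 1 ∧ c = 1) ∨ (i < s - 1 ∧ c = χ b (w (i + 1))))
    (hmid : c ≤ χ b b' ∧ χ b b' ≤ a) :
    ∀ x ∈ {x : ℕ | x = b' ∨ ∃ j, 1 ≤ j ∧ j ≤ s - 1 ∧ x = w j},
    ∀ y ∈ {x : ℕ | x = b' ∨ ∃ j, 1 ≤ j ∧ j ≤ s - 1 ∧ x = w j},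
    ∀ z ∈ {x : ℕ | x = b' ∨ ∃ j, 1 ≤ j ∧ j ≤ s - 1 ∧ x = w j},
      x < y → y < z → NonIncTriple χ x y z := by
  have hmono : StrictMonoOn w (Icc 1 (s - 1)) := fun j hj k hk hjk => hw j k hj.1 hjk hk.2
  have hmono' : StrictMonoOn w' (Icc 1 (s - 1)) := fun j hj k hk hjk => hw' j k hj.1 hjk hk.2
  have hiI : i ∈ Icc 1 (s - 1) := ⟨hi1, hi2⟩
  have hT : {x | x = b' ∨ ∃ j, 1 ≤ j ∧ j ≤ s - 1 ∧ x = w j} = insert b' (w '' Icc 1 (s - 1)) := by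
    ext; simp [eq_comm, and_assoc]
  rw [hT]
  subst hwi hw'i
  refine NonIncSet.insert_of_exchange (NonIncSeq.nonIncSet_image hSnon hmono)
    ((NonIncSeq.nonIncSet_image hS'non hmono').mono (insert_image_diff_subset_image hiI hagree))
    hbb (fun x ⟨j, hj, hx⟩ => hx ▸ hmono.lt_apply_of_eq_off hmono' hagree hiI hj) ?_ ?_
  · rintro _ ⟨j, hj, rfl⟩ hji
    have hji : j < i := (hmono.lt_iff_lt hj hiI).1 hji
    refine NonIncSeq.nonIncTriple_insert_left hSnon hj.1 hji hi2 ?_ ?_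
    · rw [hpat j i hj.1 hji hi2, hagree j hji.ne]
    · exact hmid.2.trans (ha.resolve_left fun h => by have := hj.1; omega).2.le
  · rintro _ ⟨l, hl, rfl⟩ hil
    have hil : i < l := (hmono.lt_iff_lt hiI hl).1 (hbb.trans hil)
    refine NonIncSeq.nonIncTriple_insert_right hSnon hi1 hil hl.2 ?_ ?_
    · rw [hpat i l hi1 hil hl.2, hagree l hil.ne']
    · exact (hc.resolve_left fun h => by have := hl.2; omega).2.ge.trans hmid.1

/-- Let `S = (w 1 < ... < w (s-1))` and `S' = (w' 1 < ... < w' (s-1))` be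
non-increasing sets with the same color pattern, agreeing except at position `i`,
where `w i = b < b' = w' i`.  Let `a = κ_{i-1}` (which is `χ(w (i-1), b)`, or `n` if
`i = 1`) and `c = κ_i` (which is `χ(b, w (i+1))`, or `1` if `i = s-1`).  If
`a ≥ χ(b, b') ≥ c`, then `T = S ∪ {b'}` (of size `s`) is non-increasing. -/
theorem extend_noninc_set (s n i : ℕ) (hs : 2 ≤ s) (hi1 : 1 ≤ i) (hi2 : i ≤ s - 1)
    (χ : ℕ → ℕ → ℕ) (hχ : ∀ x y, χ x y ∈ Finset.Icc 1 n)
    (b b' : ℕ) (hbb : b < b')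
    (w w' : ℕ → ℕ) (hwi : w i = b) (hw'i : w' i = b')
    (hagree : ∀ j, j ≠ i → w j = w' j)
    (hw : ∀ j k, 1 ≤ j → j < k → k ≤ s - 1 → w j < w k)
    (hw' : ∀ j k, 1 ≤ j → j < k → k ≤ s - 1 → w' j < w' k)
    (hSnon : ∀ j k l, 1 ≤ j → j < k → k < l → l ≤ s - 1 →
      NonIncTriple χ (w j) (w k) (w l))
    (hS'non : ∀ j k l, 1 ≤ j → j < k → k < l → l ≤ s - 1 →
      NonIncTriple χ (w' j) (w' k) (w' l))
    (hpat : ∀ j k, 1 ≤ j → j < k → k ≤ s - 1 → χ (w j) (w k) = χ (w' j) (w' k))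
    (a c : ℕ)
    (ha : (i = 1 ∧ a = n) ∨ (2 ≤ i ∧ a = χ (w (i - 1)) b))
    (hc : (i = s - 1 ∧ c = 1) ∨ (i < s - 1 ∧ c = χ b (w (i + 1))))
    (hmid : c ≤ χ b b' ∧ χ b b' ≤ a) :
    ∀ x ∈ {x : ℕ | x = b' ∨ ∃ j, 1 ≤ j ∧ j ≤ s - 1 ∧ x = w j},
    ∀ y ∈ {x : ℕ | x = b' ∨ ∃ j, 1 ≤ j ∧ j ≤ s - 1 ∧ x = w j},
    ∀ z ∈ {x : ℕ | x = b' ∨ ∃ j, 1 ≤ j ∧ j ≤ s - 1 ∧ x = w j},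
      x < y → y < z → NonIncTriple χ x y z :=
  extend_noninc_set_general s n i hi1 hi2 χ b b' hbb w w' hwi hw'i hagree hw hw' hSnon hS'non hpat a
    c ha hc hmid
end
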